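/- arXiv:1611.02771 — 4 statements merged into one kernel-verified Lean document; each statement's English description precedes it below -/
import Mathlib

section
/- Let n, k be positive integers with n ≥ k and n ≥ 3(n-k). In any linear chord diagram of size n with all chords of length at least k, the number of chords that start in L = {1,...,k} and end in R = {2n-k+1,...,2n} is at least n - (2n - 2k) = 2k - n, and hence at least n - k. -/
/-!
A chord of length at least `k` that does not run from `L` to `R` has an endpoint in the middle
block `M = {k+1, …, 2n-k}`, and distinct chords have distinct endpoints. Hence at most
`|M| = 2n - 2k` of the `n` chords are not `L`–`R` chords, leaving at least `2k - n` that are;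
and `3(n - k) ≤ n` is equivalent to `2k - n ≥ n - k`.
-/

/-- The set of linear chord diagrams of size `n` in which every chord has length at least `k`:
partitions of `{1,...,2n}` into blocks of size two `{s,e}` with `s < e` and `e - s ≥ k`. -/
def LCD (n k : ℕ) : Set (Finpartition (Finset.Icc 1 (2*n))) :=
  {P | ∀ p ∈ P.parts, ∃ s e : ℕ, s < e ∧ p = {s, e} ∧ k ≤ e - s}

open Finset

namespace Finpartition

variable {α : Type*} [DecidableEq α] {s : Finset α} (P : Finpartition s)

theorem card_mul_card_parts_of_forall_card_eq {m : ℕ} (h : ∀ p ∈ P.parts, #p = m) :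
    m * #P.parts = #s := by
  rw [← P.sum_card_parts, sum_congr rfl h, sum_const, smul_eq_mul, mul_comm]

theorem card_filter_inter_nonempty_le (t : Finset α) :
    #{p ∈ P.parts | (p ∩ t).Nonempty} ≤ #t :=
  card_le_card_of_forall_subsingleton (fun p x => x ∈ p)
    (fun _ hp => by
      obtain ⟨x, hx⟩ := (mem_filter.1 hp).2
      exact ⟨x, (mem_inter.1 hx).2, (mem_inter.1 hx).1⟩)
    (fun _ _ _ ⟨hp, hxp⟩ _ ⟨hq, hxq⟩ =>
      P.eq_of_mem_parts (mem_filter.1 hp).1 (mem_filter.1 hq).1 hxp hxq)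

theorem card_parts_sub_card_le_ncard_sep (q : Finset α → Prop) (t : Finset α)
    (h : ∀ p ∈ P.parts, ¬q p → (p ∩ t).Nonempty) :
    #P.parts - #t ≤ {p ∈ (P.parts : Set (Finset α)) | q p}.ncard := by
  classical
  have hsep : {p ∈ (P.parts : Set (Finset α)) | q p} = ↑(P.parts.filter q) := by
    rw [coe_filter]; rfl
  rw [hsep, Set.ncard_coe_finset]
  have hsplit := P.parts.card_filter_add_card_filter_not q
  have hnot : #(P.parts.filter fun p => ¬q p) ≤ #t :=
    (card_le_card (monotone_filter_right _ h)).trans (P.card_filter_inter_nonempty_le t)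
  omega

end Finpartition

theorem pair_inter_middle_nonempty {n k s e : ℕ} (hs : 1 ≤ s) (he : e ≤ 2 * n) (hlen : k ≤ e - s)
    (hse : s < e) (hLR : ¬(s ≤ k ∧ 2 * n - k + 1 ≤ e)) :
    (({s, e} : Finset ℕ) ∩ Icc (k + 1) (2 * n - k)).Nonempty := by
  by_cases hsk : s ≤ k
  · exact ⟨e, mem_inter.2 ⟨mem_insert_of_mem (mem_singleton_self e), mem_Icc.2 (by omega)⟩⟩
  · exact ⟨s, mem_inter.2 ⟨mem_insert_self s {e}, mem_Icc.2 (by omega)⟩⟩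

theorem card_parts_of_mem_LCD {n k : ℕ} {P : Finpartition (Icc 1 (2 * n))} (hP : P ∈ LCD n k) :
    #P.parts = n := by
  have h := P.card_mul_card_parts_of_forall_card_eq (m := 2) fun p hp => by
    obtain ⟨s, e, hse, rfl, -⟩ := hP p hp
    exact card_pair hse.ne
  rw [Nat.card_Icc] at h
  omega

theorem stmt_5_general (n k : ℕ) (hkn : k ≤ n) (h3 : 3 * (n - k) ≤ n)
    (P : Finpartition (Finset.Icc 1 (2*n))) (hP : P ∈ LCD n k) :
    2 * k - n ≤ {p ∈ (P.parts : Set (Finset ℕ)) |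
        ∃ s e : ℕ, s < e ∧ p = {s, e} ∧ s ≤ k ∧ 2 * n - k + 1 ≤ e}.ncard ∧
    n - k ≤ {p ∈ (P.parts : Set (Finset ℕ)) |
        ∃ s e : ℕ, s < e ∧ p = {s, e} ∧ s ≤ k ∧ 2 * n - k + 1 ≤ e}.ncard := by
  have hcount := P.card_parts_sub_card_le_ncard_sep
    (fun p => ∃ s e : ℕ, s < e ∧ p = {s, e} ∧ s ≤ k ∧ 2 * n - k + 1 ≤ e) (Icc (k + 1) (2 * n - k))
    fun p hp hLR => by
      obtain ⟨s, e, hse, rfl, hlen⟩ := hP p hp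
      have hsub := P.le hp
      simp only [insert_subset_iff, singleton_subset_iff, mem_Icc] at hsub
      exact pair_inter_middle_nonempty hsub.1.1 hsub.2.2 hlen hse
        fun h => hLR ⟨s, e, hse, rfl, h⟩
  rw [card_parts_of_mem_LCD hP, Nat.card_Icc] at hcount
  exact ⟨by omega, by omega⟩

theorem stmt_5 (n k : ℕ) (hn : 1 ≤ n) (hk : 1 ≤ k) (hkn : k ≤ n) (h3 : 3 * (n - k) ≤ n)
    (P : Finpartition (Finset.Icc 1 (2*n))) (hP : P ∈ LCD n k) :
    2 * k - n ≤ {p ∈ (P.parts : Set (Finset ℕ)) |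
        ∃ s e : ℕ, s < e ∧ p = {s, e} ∧ s ≤ k ∧ 2 * n - k + 1 ≤ e}.ncard ∧
    n - k ≤ {p ∈ (P.parts : Set (Finset ℕ)) |
        ∃ s e : ℕ, s < e ∧ p = {s, e} ∧ s ≤ k ∧ 2 * n - k + 1 ≤ e}.ncard :=
  stmt_5_general n k hkn h3 P hP
end

section
/- Let n, k be positive integers with n+1 ≥ 3(n-k) and n ≥ k. Let C be a linear chord diagram of size n+1 in which every chord has length at least k+1. Let a be the chord of C whose end point is 2n-k+2 (the smallest element of {2(n+1)-(k+1)+1,...,2(n+1)}), and let S be the set of chords of C that start in {1,...,k+1} and end in {2n-k+2,...,2n+2}. Then the number of chords b ∈ S with s_b < s_a is strictly less than n - k + 1. -/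
/-!
Put `b = 2n - k + 1`. A chord inside `{1, …, b}` has length at least `k + 1`, so it starts in
`{1, …, 2n - 2k}`; so does every chord of `S` starting before `a`, since `a = {s_a, b + 1}` forces
`s_a ≤ 2n - 2k + 1`. Distinct chords are disjoint and the chords of `S` end after `b`, so `S` and the
chords inside `{1, …, b}` together number at most `2n - 2k`. Every other chord meets the `k + 1` points
`b + 1, …, 2n + 2`, so at least `n - k` chords lie inside `{1, …, b}`, leaving at most `n - k` for `S`.
-/

open Finset

theorem Finpartition.card_le_card_of_forall_exists_mem {α : Type*} [DecidableEq α] {s : Finset α}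
    (P : Finpartition s) {T : Finset (Finset α)} (hT : T ⊆ P.parts) {A : Finset α}
    (h : ∀ p ∈ T, ∃ x ∈ A, x ∈ p) : #T ≤ #A :=
  card_le_card_of_forall_subsingleton (fun p x ↦ x ∈ p) h
    fun _ _ _ hp _ hq ↦ P.eq_of_mem_parts (hT hp.1) (hT hq.1) hp.2 hq.2

namespace LCD

variable {N L : ℕ} {P : Finpartition (Icc 1 (2 * N))}

theorem card_parts (hP : P ∈ LCD N L) : #P.parts = N := by
  have hcard : ∀ p ∈ P.parts, #p = 2 := by
    intro p hp
    obtain ⟨s, e, hse, rfl, -⟩ := hP p hp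
    exact card_pair hse.ne
  have := P.sum_card_parts
  rw [sum_const_nat hcard, Nat.card_Icc] at this
  omega

theorem le_sub_of_pair_mem (hP : P ∈ LCD N L) {s e : ℕ} (hse : s < e) (h : {s, e} ∈ P.parts) :
    L ≤ e - s := by
  obtain ⟨s', e', hse', hp, hL⟩ := hP _ h
  have hs : s ∈ ({s', e'} : Finset ℕ) := hp ▸ mem_insert_self s {e}
  have he : e ∈ ({s', e'} : Finset ℕ) := hp ▸ mem_insert_of_mem (mem_singleton_self e)
  simp only [mem_insert, mem_singleton] at hs he
  omega

theorem exists_mem_le_sub_of_forall_le (hP : P ∈ LCD N L) {p : Finset ℕ} (hp : p ∈ P.parts)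
    {b : ℕ} (hb : ∀ x ∈ p, x ≤ b) : ∃ x ∈ p, x ≤ b - L := by
  obtain ⟨s, e, hse, rfl, hL⟩ := hP p hp
  have he := hb e (mem_insert_of_mem (mem_singleton_self e))
  exact ⟨s, mem_insert_self s {e}, by omega⟩

theorem card_filter_exists_le_le (c : ℕ) : #{p ∈ P.parts | ∃ x ∈ p, x ≤ c} ≤ c := by
  calc #{p ∈ P.parts | ∃ x ∈ p, x ≤ c}
      ≤ #(Icc 1 c) := by
        refine P.card_le_card_of_forall_exists_mem (filter_subset _ _) fun p hp ↦ ?_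
        obtain ⟨hp, x, hx, hxc⟩ := mem_filter.mp hp
        exact ⟨x, mem_Icc.mpr ⟨(mem_Icc.mp (P.le hp hx)).1, hxc⟩, hx⟩
    _ = c := by simp

theorem card_filter_exists_lt_le (b : ℕ) :
    #{p ∈ P.parts | ∃ x ∈ p, b < x} ≤ 2 * N - b := by
  calc #{p ∈ P.parts | ∃ x ∈ p, b < x}
      ≤ #(Icc (b + 1) (2 * N)) := by
        refine P.card_le_card_of_forall_exists_mem (filter_subset _ _) fun p hp ↦ ?_
        obtain ⟨hp, x, hx, hbx⟩ := mem_filter.mp hp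
        exact ⟨x, mem_Icc.mpr ⟨hbx, (mem_Icc.mp (P.le hp hx)).2⟩, hx⟩
    _ = 2 * N - b := by rw [Nat.card_Icc]; omega

end LCD

theorem stmt_6_general (n k : ℕ)
    (P : Finpartition (Finset.Icc 1 (2*(n+1)))) (hP : P ∈ LCD (n+1) (k+1))
    (sa : ℕ) (ha : sa < 2 * n - k + 2) (haP : ({sa, 2 * n - k + 2} : Finset ℕ) ∈ P.parts) :
    {p ∈ (P.parts : Set (Finset ℕ)) |
        ∃ s e : ℕ, s < e ∧ p = {s, e} ∧ s ≤ k + 1 ∧ 2 * n - k + 2 ≤ e ∧ s < sa}.ncard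
      < n - k + 1 := by
  classical
  set S := {p ∈ P.parts | ∃ s e : ℕ, s < e ∧ p = {s, e} ∧ s ≤ k + 1 ∧ 2 * n - k + 2 ≤ e ∧ s < sa}
  set W := {p ∈ P.parts | ∀ x ∈ p, x ≤ 2 * n - k + 1}
  suffices #S < n - k + 1 by rwa [← Set.ncard_coe_finset, coe_filter] at this
  have hsa := LCD.le_sub_of_pair_mem hP ha haP
  have hSW : S ∪ W ⊆ {p ∈ P.parts | ∃ x ∈ p, x ≤ 2 * n - 2 * k} := by
    refine union_subset (fun p hp ↦ ?_) fun p hp ↦ ?_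
    · obtain ⟨hp, s, e, -, rfl, -, -, hs⟩ := mem_filter.mp hp
      exact mem_filter.mpr ⟨hp, s, mem_insert_self s {e}, by omega⟩
    · obtain ⟨hp, hW⟩ := mem_filter.mp hp
      obtain ⟨x, hx, hxb⟩ := LCD.exists_mem_le_sub_of_forall_le hP hp hW
      exact mem_filter.mpr ⟨hp, x, hx, by omega⟩
  have hdisj : Disjoint S W := disjoint_filter.mpr fun p _ ⟨s, e, _, hp, _, he, _⟩ hW ↦ by
    have := hW e (hp ▸ mem_insert_of_mem (mem_singleton_self e))
    omega
  have hcard := (card_union_of_disjoint hdisj).symm.trans_le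
    ((card_le_card hSW).trans (LCD.card_filter_exists_le_le (P := P) _))
  have hW : #W + #{p ∈ P.parts | ∃ x ∈ p, 2 * n - k + 1 < x} = n + 1 := by
    have hsplit := card_filter_add_card_filter_not (s := P.parts) (fun p ↦ ∀ x ∈ p, x ≤ 2 * n - k + 1)
    simp only [not_forall, not_le, exists_prop, LCD.card_parts hP] at hsplit
    exact hsplit
  have hout := LCD.card_filter_exists_lt_le (P := P) (2 * n - k + 1)
  omega

theorem stmt_6 (n k : ℕ) (hn : 1 ≤ n) (hk : 1 ≤ k) (hkn : k ≤ n) (h3 : 3 * (n - k) ≤ n + 1)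
    (P : Finpartition (Finset.Icc 1 (2*(n+1)))) (hP : P ∈ LCD (n+1) (k+1))
    (sa : ℕ) (ha : sa < 2 * n - k + 2) (haP : ({sa, 2 * n - k + 2} : Finset ℕ) ∈ P.parts) :
    {p ∈ (P.parts : Set (Finset ℕ)) |
        ∃ s e : ℕ, s < e ∧ p = {s, e} ∧ s ≤ k + 1 ∧ 2 * n - k + 2 ≤ e ∧ s < sa}.ncard
      < n - k + 1 :=
  stmt_6_general n k P hP sa ha haP
end

section
/- Let n, k be positive integers with n ≥ k and n ≥ 3(n-k). In any linear chord diagram of size n with all chords of length at least k, order the chords ending in M = {k+1,...,2n-k} as c_1 < c_2 < ... < c_{n-k} by end point; then for each i, e_{c_i} ≤ n + i and s_{c_i} ≤ n - k + i. -/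
lemma Fin.apply_add_le_apply_add_of_strictMono {m : ℕ} {f : Fin m → ℕ} (hf : StrictMono f)
    {i j : Fin m} (hij : i ≤ j) : f i + j ≤ f j + i := by
  obtain ⟨i, hi⟩ := i
  obtain ⟨j, hj⟩ := j
  simp only [Fin.mk_le_mk] at hij ⊢
  induction j, hij using Nat.le_induction with
  | base => rfl
  | succ j hij ih =>
    have step : f ⟨j, by omega⟩ < f ⟨j + 1, hj⟩ := hf (Fin.mk_lt_mk.mpr j.lt_succ_self)
    have := ih (by omega)
    omega

lemma LCD.le_sub_of_mem_parts {n k : ℕ} {P : Finpartition (Finset.Icc 1 (2*n))}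
    (hP : P ∈ LCD n k) {s e : ℕ} (hse : s < e) (hmem : ({s, e} : Finset ℕ) ∈ P.parts) :
    k ≤ e - s := by
  obtain ⟨s', e', hse', hpair, hlen⟩ := hP _ hmem
  have := Set.pair_eq_pair_iff.mp (by simpa using congrArg ((↑) : Finset ℕ → Set ℕ) hpair)
  omega

theorem stmt_7_general (n k : ℕ) (P : Finpartition (Finset.Icc 1 (2*n))) (hP : P ∈ LCD n k)
    (c : Fin (n - k) → ℕ × ℕ)
    (hc : ∀ i, (c i).1 < (c i).2 ∧ ({(c i).1, (c i).2} : Finset ℕ) ∈ P.parts ∧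
        k + 1 ≤ (c i).2 ∧ (c i).2 ≤ 2 * n - k)
    (hmono : StrictMono (fun i => (c i).2)) :
    ∀ i : Fin (n - k), (c i).2 ≤ n + ((i : ℕ) + 1) ∧ (c i).1 ≤ n - k + ((i : ℕ) + 1) := by
  intro i
  have hi := i.isLt
  obtain ⟨hlt, hmem, -, -⟩ := hc i
  let last : Fin (n - k) := ⟨n - k - 1, by omega⟩
  have hgap : (c i).2 + (n - k - 1) ≤ (c last).2 + i :=
    Fin.apply_add_le_apply_add_of_strictMono hmono (Fin.mk_le_mk.mpr (by omega))
  have hlast := (hc last).2.2.2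
  have hlen := LCD.le_sub_of_mem_parts hP hlt hmem
  omega

theorem stmt_7 (n k : ℕ) (hn : 1 ≤ n) (hk : 1 ≤ k) (hkn : k ≤ n) (h3 : 3 * (n - k) ≤ n)
    (P : Finpartition (Finset.Icc 1 (2*n))) (hP : P ∈ LCD n k)
    (c : Fin (n - k) → ℕ × ℕ)
    (hc : ∀ i, (c i).1 < (c i).2 ∧ ({(c i).1, (c i).2} : Finset ℕ) ∈ P.parts ∧
        k + 1 ≤ (c i).2 ∧ (c i).2 ≤ 2 * n - k)
    (hmono : StrictMono (fun i => (c i).2)) :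
    ∀ i : Fin (n - k), (c i).2 ≤ n + ((i : ℕ) + 1) ∧ (c i).1 ≤ n - k + ((i : ℕ) + 1) :=
  stmt_7_general n k P hP c hc hmono
end

section
/- Let n and k be positive integers with n ≥ 3(n-k) and n ≥ k. Then the number of linear chord diagrams of size n+1 in which every chord has length at least k+1 equals (n - k + 1) times the number of linear chord diagrams of size n in which every chord has length at least k. -/
/-!
Write `n = k + m`, so that `2 * m ≤ k`. In a diagram of size `k + m + 1` with chords of length at
least `k + 1`, the point `p = k + 2 * m + 2` is too close to the end to be a left endpoint, so it
closes a chord `(o, p)` with `o ≤ 2 * m + 1`, while the point `2 * m + 1` is too close to the start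
to be a right endpoint. Deleting `(o, p)`, moving the point `2 * m + 1` into the vacated position
`o` and closing up the gaps gives a diagram of size `k + m` with chords of length at least `k` in
which the chord starting at `o` ends after `k + 2 * m`, and this is reversible. In a diagram of
size `k + m` exactly `m` chords end at or before `k + 2 * m`, all starting in `{1, ..., 2 * m}`, so
exactly `m + 1` of the positions `o ∈ {1, ..., 2 * m + 1}` qualify.
-/

open Finset

def chordEnds (q : ℕ × ℕ) : Finset ℕ := {q.1, q.2}

@[simp]
lemma mem_chordEnds {q : ℕ × ℕ} {x : ℕ} : x ∈ chordEnds q ↔ x = q.1 ∨ x = q.2 := by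
  simp [chordEnds]

lemma chordEnds_map (f : ℕ → ℕ) (q : ℕ × ℕ) :
    chordEnds (Prod.map f f q) = (chordEnds q).image f := by
  simp [chordEnds, image_insert]

lemma chordEnds_injOn : Set.InjOn chordEnds {q | q.1 < q.2} := by
  rintro ⟨a, b⟩ (hab : a < b) ⟨c, d⟩ (hcd : c < d) h
  have hc : c ∈ chordEnds (a, b) := h ▸ by simp
  have hd : d ∈ chordEnds (a, b) := h ▸ by simp
  have ha : a ∈ chordEnds (c, d) := h ▸ by simp
  simp only [mem_chordEnds] at hc hd ha
  ext <;> simp only <;> omega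

/-- A chord `{s, e}` with `s < e` is recorded as the pair `(s, e)`. -/
structure IsChordDiagram (S : Finset ℕ) (k : ℕ) (F : Finset (ℕ × ℕ)) : Prop where
  lt : ∀ q ∈ F, q.1 < q.2
  add_le : ∀ q ∈ F, q.1 + k ≤ q.2
  chordEnds_subset : ∀ q ∈ F, chordEnds q ⊆ S
  existsUnique : ∀ x ∈ S, ∃! q, q ∈ F ∧ x ∈ chordEnds q

namespace IsChordDiagram

variable {S : Finset ℕ} {k : ℕ} {F : Finset (ℕ × ℕ)}

lemma fst_mem (hF : IsChordDiagram S k F) {q : ℕ × ℕ} (hq : q ∈ F) : q.1 ∈ S :=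
  hF.chordEnds_subset q hq (by simp)

lemma snd_mem (hF : IsChordDiagram S k F) {q : ℕ × ℕ} (hq : q ∈ F) : q.2 ∈ S :=
  hF.chordEnds_subset q hq (by simp)

lemma eq_of_mem_chordEnds (hF : IsChordDiagram S k F) {q q' : ℕ × ℕ} (hq : q ∈ F) (hq' : q' ∈ F)
    {x : ℕ} (hx : x ∈ chordEnds q) (hx' : x ∈ chordEnds q') : q = q' :=
  (hF.existsUnique x (hF.chordEnds_subset q hq hx)).unique ⟨hq, hx⟩ ⟨hq', hx'⟩

lemma biUnion_chordEnds (hF : IsChordDiagram S k F) : F.biUnion chordEnds = S := by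
  refine Subset.antisymm (biUnion_subset.2 hF.chordEnds_subset) fun x hx => ?_
  obtain ⟨q, ⟨hq, hxq⟩, -⟩ := hF.existsUnique x hx
  exact mem_biUnion.2 ⟨q, hq, hxq⟩

lemma two_mul_card (hF : IsChordDiagram S k F) : 2 * #F = #S := by
  have hdisj : (F : Set (ℕ × ℕ)).PairwiseDisjoint chordEnds := fun q hq q' hq' hne =>
    disjoint_left.2 fun x hx hx' => hne (hF.eq_of_mem_chordEnds hq hq' hx hx')
  rw [← hF.biUnion_chordEnds, card_biUnion hdisj, sum_const_nat fun q hq => ?_, mul_comm]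
  exact card_pair (hF.lt q hq).ne

lemma image (hF : IsChordDiagram S k F) {f : ℕ → ℕ} (hf : Set.InjOn f S) {l : ℕ}
    (hchord : ∀ q ∈ F, f q.1 < f q.2 ∧ f q.1 + l ≤ f q.2) :
    IsChordDiagram (S.image f) l (F.image (Prod.map f f)) where
  lt := forall_mem_image.2 fun q hq => (hchord q hq).1
  add_le := forall_mem_image.2 fun q hq => (hchord q hq).2
  chordEnds_subset := forall_mem_image.2 fun q hq => by
    rw [chordEnds_map]
    exact image_subset_image (hF.chordEnds_subset q hq)
  existsUnique := forall_mem_image.2 fun x hx => by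
    obtain ⟨q, ⟨hq, hxq⟩, huniq⟩ := hF.existsUnique x hx
    refine ⟨Prod.map f f q, ⟨mem_image_of_mem _ hq, ?_⟩, ?_⟩
    · rw [chordEnds_map]
      exact mem_image_of_mem _ hxq
    rintro _ ⟨hmem, hy⟩
    obtain ⟨p, hp, rfl⟩ := mem_image.1 hmem
    rw [chordEnds_map, mem_image] at hy
    obtain ⟨z, hz, hzx⟩ := hy
    rw [hf (hF.chordEnds_subset p hp hz) hx hzx] at hz
    rw [huniq p ⟨hp, hz⟩]

lemma insert (hF : IsChordDiagram S k F) {q : ℕ × ℕ} (hlt : q.1 < q.2) (hk : q.1 + k ≤ q.2)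
    (hq : Disjoint (chordEnds q) S) : IsChordDiagram (chordEnds q ∪ S) k (insert q F) where
  lt := (forall_mem_insert q F _).2 ⟨hlt, hF.lt⟩
  add_le := (forall_mem_insert q F _).2 ⟨hk, hF.add_le⟩
  chordEnds_subset := (forall_mem_insert q F _).2
    ⟨subset_union_left, fun p hp => (hF.chordEnds_subset p hp).trans subset_union_right⟩
  existsUnique x hx := by
    rcases mem_union.1 hx with hxq | hxS
    · refine ⟨q, ⟨mem_insert_self _ _, hxq⟩, ?_⟩
      rintro p ⟨hp, hxp⟩
      rcases mem_insert.1 hp with rfl | hp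
      · rfl
      · exact absurd (hF.chordEnds_subset p hp hxp) (disjoint_left.1 hq hxq)
    · obtain ⟨p, ⟨hp, hxp⟩, huniq⟩ := hF.existsUnique x hxS
      refine ⟨p, ⟨mem_insert_of_mem hp, hxp⟩, ?_⟩
      rintro p' ⟨hp', hxp'⟩
      rcases mem_insert.1 hp' with rfl | hp'
      · exact absurd hxS (disjoint_left.1 hq hxp')
      · exact huniq p' ⟨hp', hxp'⟩

lemma erase (hF : IsChordDiagram S k F) {q : ℕ × ℕ} (hq : q ∈ F) :
    IsChordDiagram (S \ chordEnds q) k (F.erase q) where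
  lt p hp := hF.lt p (mem_of_mem_erase hp)
  add_le p hp := hF.add_le p (mem_of_mem_erase hp)
  chordEnds_subset p hp := by
    obtain ⟨hpq, hp⟩ := mem_erase.1 hp
    exact subset_sdiff.2 ⟨hF.chordEnds_subset p hp, disjoint_left.2 fun x hxp hxq =>
      hpq (hF.eq_of_mem_chordEnds hp hq hxp hxq)⟩
  existsUnique x hx := by
    obtain ⟨hxS, hxq⟩ := mem_sdiff.1 hx
    obtain ⟨p, ⟨hp, hxp⟩, huniq⟩ := hF.existsUnique x hxS
    refine ⟨p, ⟨mem_erase.2 ⟨?_, hp⟩, hxp⟩, fun p' ⟨hp', hxp'⟩ =>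
      huniq p' ⟨mem_of_mem_erase hp', hxp'⟩⟩
    rintro rfl
    exact hxq hxp

lemma snd_eq_of_lt_add {N : ℕ} (hF : IsChordDiagram (Icc 1 N) k F) {q : ℕ × ℕ} (hq : q ∈ F)
    {x : ℕ} (hx : x ∈ chordEnds q) (hxN : N < x + k) : q.2 = x := by
  have := mem_Icc.1 (hF.snd_mem hq)
  have := hF.add_le q hq
  rw [mem_chordEnds] at hx
  omega

lemma existsUnique_mk_mem {N : ℕ} (hF : IsChordDiagram (Icc 1 N) k F) {x : ℕ}
    (hx : x ∈ Icc 1 N) (hxN : N < x + k) : ∃! o, (o, x) ∈ F := by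
  obtain ⟨q, ⟨hq, hxq⟩, -⟩ := hF.existsUnique x hx
  refine ⟨q.1, by rwa [← hF.snd_eq_of_lt_add hq hxq hxN], fun o ho => ?_⟩
  exact congrArg Prod.fst (hF.eq_of_mem_chordEnds ho hq (by simp) hxq)

lemma card_filter_lt_snd_add {N : ℕ} (hF : IsChordDiagram (Icc 1 N) k F) (hkN : k ≤ N) :
    #(F.filter fun q => N < q.2 + k) = k := by
  have himage : (F.filter fun q => N < q.2 + k).image Prod.snd = Ioc (N - k) N := by
    ext x
    simp only [mem_image, mem_filter, mem_Ioc]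
    constructor
    · rintro ⟨q, ⟨hq, hqN⟩, rfl⟩
      have := mem_Icc.1 (hF.snd_mem hq)
      omega
    · intro hx
      obtain ⟨q, ⟨hq, hxq⟩, -⟩ := hF.existsUnique x (mem_Icc.2 ⟨by omega, hx.2⟩)
      have := hF.snd_eq_of_lt_add hq hxq (by omega)
      exact ⟨q, ⟨hq, by omega⟩, this⟩
  have hinj : Set.InjOn Prod.snd (F.filter fun q => N < q.2 + k : Set (ℕ × ℕ)) :=
    fun q hq q' hq' h => hF.eq_of_mem_chordEnds (mem_filter.1 hq).1 (mem_filter.1 hq').1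
      (x := q.2) (by simp) (by simp [h])
  rw [← card_image_of_injOn hinj, himage, Nat.card_Ioc]
  omega

lemma card_Icc_filter_forall_lt_snd {m : ℕ} (hF : IsChordDiagram (Icc 1 (2 * (k + m))) k F) :
    #((Icc 1 (2 * m + 1)).filter fun o => ∀ q ∈ F, q.1 = o → k + 2 * m < q.2) = m + 1 := by
  set short := F.filter fun q => ¬ 2 * (k + m) < q.2 + k
  have hshort : #short = m := by
    have hlong := hF.card_filter_lt_snd_add (by omega)
    have hcard := hF.two_mul_card
    rw [Nat.card_Icc] at hcard
    have : #(F.filter fun q => 2 * (k + m) < q.2 + k) + #short = #F :=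
      card_filter_add_card_filter_not _
    omega
  have hinj : Set.InjOn Prod.fst (short : Set (ℕ × ℕ)) :=
    fun q hq q' hq' h => hF.eq_of_mem_chordEnds (mem_filter.1 hq).1 (mem_filter.1 hq').1
      (x := q.1) (by simp) (by simp [h])
  have hsub : short.image Prod.fst ⊆ Icc 1 (2 * m + 1) := by
    refine forall_mem_image.2 fun q hq => ?_
    obtain ⟨hq, hlt⟩ := mem_filter.1 hq
    have := mem_Icc.1 (hF.fst_mem hq)
    have := hF.add_le q hq
    exact mem_Icc.2 ⟨by omega, by omega⟩
  have hfilter : ((Icc 1 (2 * m + 1)).filter fun o => ∀ q ∈ F, q.1 = o → k + 2 * m < q.2) =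
      Icc 1 (2 * m + 1) \ short.image Prod.fst := by
    ext o
    simp only [mem_filter, mem_sdiff, mem_image, short, not_exists, not_and, and_imp]
    refine and_congr_right fun _ => forall₂_congr fun q hq => ?_
    constructor <;> intro h h' <;> omega
  rw [hfilter, card_sdiff_of_subset hsub, card_image_of_injOn hinj, hshort, Nat.card_Icc]
  omega

end IsChordDiagram

section Finpartition

variable {S : Finset ℕ} {k : ℕ}

def finpartitionOfChords {F : Finset (ℕ × ℕ)} (hF : IsChordDiagram S k F) : Finpartition S :=
  .ofExistsUnique (F.image chordEnds)
    (forall_mem_image.2 hF.chordEnds_subset)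
    (fun x hx => by
      obtain ⟨q, hq, huniq⟩ := hF.existsUnique x hx
      refine ⟨chordEnds q, ⟨mem_image_of_mem _ hq.1, hq.2⟩, ?_⟩
      rintro _ ⟨hmem, hxp⟩
      obtain ⟨p, hp, rfl⟩ := mem_image.1 hmem
      rw [huniq p ⟨hp, hxp⟩])
    (fun h => by
      obtain ⟨q, -, hq⟩ := mem_image.1 h
      exact insert_ne_empty _ _ hq)

def chordsOfFinpartition (P : Finpartition S) : Finset (ℕ × ℕ) :=
  (S ×ˢ S).filter fun q => q.1 < q.2 ∧ chordEnds q ∈ P.parts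

lemma mem_chordsOfFinpartition {P : Finpartition S} {q : ℕ × ℕ} :
    q ∈ chordsOfFinpartition P ↔ q.1 < q.2 ∧ chordEnds q ∈ P.parts := by
  refine mem_filter.trans ⟨And.right, fun h => ⟨mem_product.2 ⟨?_, ?_⟩, h⟩⟩ <;>
    exact P.subset h.2 (by simp)

lemma isChordDiagram_chordsOfFinpartition {P : Finpartition S}
    (hP : ∀ p ∈ P.parts, ∃ s e : ℕ, s < e ∧ p = {s, e} ∧ k ≤ e - s) :
    IsChordDiagram S k (chordsOfFinpartition P) where
  lt q hq := (mem_chordsOfFinpartition.1 hq).1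
  add_le q hq := by
    obtain ⟨hlt, hp⟩ := mem_chordsOfFinpartition.1 hq
    obtain ⟨s, e, hse, hqse, hk⟩ := hP _ hp
    obtain rfl : q = (s, e) := chordEnds_injOn hlt hse hqse
    dsimp only
    omega
  chordEnds_subset q hq := P.subset (mem_chordsOfFinpartition.1 hq).2
  existsUnique x hx := by
    obtain ⟨t, ht, hxt⟩ := P.exists_mem hx
    obtain ⟨s, e, hse, rfl, -⟩ := hP t ht
    refine ⟨(s, e), ⟨mem_chordsOfFinpartition.2 ⟨hse, ht⟩, hxt⟩, ?_⟩
    rintro q ⟨hq, hxq⟩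
    obtain ⟨hlt, hqP⟩ := mem_chordsOfFinpartition.1 hq
    exact chordEnds_injOn hlt hse (P.eq_of_mem_parts hqP ht hxq hxt)

end Finpartition

def chordDiagramEquiv (S : Finset ℕ) (k : ℕ) :
    {P : Finpartition S | ∀ p ∈ P.parts, ∃ s e : ℕ, s < e ∧ p = {s, e} ∧ k ≤ e - s} ≃
      {F // IsChordDiagram S k F} where
  toFun P := ⟨chordsOfFinpartition P.1, isChordDiagram_chordsOfFinpartition P.2⟩
  invFun F := ⟨finpartitionOfChords F.2, fun p hp => by
    obtain ⟨q, hq, rfl⟩ := mem_image.1 hp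
    have := F.2.add_le q hq
    exact ⟨q.1, q.2, F.2.lt q hq, rfl, by omega⟩⟩
  left_inv P := by
    obtain ⟨P, hP⟩ := P
    refine Subtype.ext (Finpartition.ext ?_)
    ext t
    simp only [finpartitionOfChords, Finpartition.ofExistsUnique_parts, mem_image,
      mem_chordsOfFinpartition]
    refine ⟨fun ⟨q, ⟨_, hq⟩, hqt⟩ => hqt ▸ hq, fun ht => ?_⟩
    obtain ⟨s, e, hse, rfl, -⟩ := hP t ht
    exact ⟨(s, e), ⟨hse, ht⟩, rfl⟩
  right_inv F := by
    obtain ⟨F, hF⟩ := F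
    refine Subtype.ext (Finset.ext fun q => ?_)
    simp only [mem_chordsOfFinpartition, finpartitionOfChords, Finpartition.ofExistsUnique_parts,
      mem_image]
    refine ⟨fun ⟨hlt, p, hp, hpq⟩ => ?_, fun hq => ⟨hF.lt q hq, q, hq, rfl⟩⟩
    rwa [← chordEnds_injOn (hF.lt p hp) hlt hpq]

open Classical in
noncomputable def chordDiagrams (n k : ℕ) : Finset (Finset (ℕ × ℕ)) :=
  (Icc 1 (2 * n) ×ˢ Icc 1 (2 * n)).powerset.filter (IsChordDiagram (Icc 1 (2 * n)) k)

lemma mem_chordDiagrams {n k : ℕ} {F : Finset (ℕ × ℕ)} :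
    F ∈ chordDiagrams n k ↔ IsChordDiagram (Icc 1 (2 * n)) k F := by
  classical
  refine mem_filter.trans ⟨And.right, fun hF => ⟨mem_powerset.2 fun q hq => ?_, hF⟩⟩
  exact mem_product.2 ⟨hF.fst_mem hq, hF.snd_mem hq⟩

lemma card_LCD (n k : ℕ) : Nat.card (LCD n k) = #(chordDiagrams n k) := by
  have e : LCD n k ≃ chordDiagrams n k := (chordDiagramEquiv _ k).trans
    (Equiv.subtypeEquivRight fun _ => mem_chordDiagrams.symm)
  rw [Nat.card_congr e, Nat.card_eq_fintype_card, Fintype.card_coe]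

section Relabel

variable (k m o : ℕ)

/-- An injection of `ℕ` onto the complement of `{o, k + 2 * m + 2}` sending `o` to `2 * m + 1`,
with left inverse `lower k m o`. -/
def raise (x : ℕ) : ℕ :=
  if x ≤ 2 * m then (if x = o then 2 * m + 1 else x) else if x ≤ k + 2 * m then x + 1 else x + 2

def lower (x : ℕ) : ℕ :=
  if x ≤ 2 * m then x else if x = 2 * m + 1 then o else if x ≤ k + 2 * m + 1 then x - 1 else x - 2

lemma lower_raise (x : ℕ) : lower k m o (raise k m o x) = x := by
  unfold lower raise; split_ifs <;> omega

lemma lower_comp_raise : lower k m o ∘ raise k m o = id :=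
  funext (lower_raise k m o)

lemma raise_ne (x : ℕ) : raise k m o x ≠ k + 2 * m + 2 := by
  unfold raise; split_ifs <;> omega

lemma raise_injective : Function.Injective (raise k m o) :=
  Function.LeftInverse.injective (lower_raise k m o)

variable {k m o}

lemma raise_lower (ho : o ≤ 2 * m + 1) {x : ℕ} (hx : x ∉ chordEnds (o, k + 2 * m + 2)) :
    raise k m o (lower k m o x) = x := by
  simp only [chordEnds, mem_insert, mem_singleton, not_or] at hx
  unfold lower raise; split_ifs <;> omega

lemma raise_chord (hmk : 2 * m ≤ k) {s e : ℕ} (hs : 1 ≤ s) (hk : s + k ≤ e)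
    (he : e ≤ 2 * (k + m)) (hlong : s = o → k + 2 * m < e) :
    raise k m o s < raise k m o e ∧ raise k m o s + (k + 1) ≤ raise k m o e := by
  unfold raise; split_ifs <;> omega

lemma lower_chord (hmk : 2 * m ≤ k) (ho : o ≤ 2 * m + 1) {s e : ℕ} (hs1 : 1 ≤ s)
    (hk : s + (k + 1) ≤ e) (he : e ≤ 2 * (k + m + 1))
    (he' : e ∉ chordEnds (o, k + 2 * m + 2)) :
    lower k m o s < lower k m o e ∧ lower k m o s + k ≤ lower k m o e := by
  simp only [chordEnds, mem_insert, mem_singleton, not_or] at he'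
  unfold lower; split_ifs <;> omega

lemma lower_chord_long {s e : ℕ}
    (hk : s + (k + 1) ≤ e) (hs : s ∉ chordEnds (o, k + 2 * m + 2))
    (he' : e ∉ chordEnds (o, k + 2 * m + 2)) (hso : lower k m o s = o) :
    k + 2 * m < lower k m o e := by
  simp only [chordEnds, mem_insert, mem_singleton, not_or] at hs he'
  unfold lower at *; split_ifs at * <;> omega

lemma image_raise_Icc (ho : o ∈ Icc 1 (2 * m + 1)) :
    (Icc 1 (2 * (k + m))).image (raise k m o) =
      Icc 1 (2 * (k + m + 1)) \ chordEnds (o, k + 2 * m + 2) := by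
  rw [mem_Icc] at ho
  ext y
  simp only [mem_image, mem_sdiff, mem_Icc, chordEnds, mem_insert, mem_singleton, not_or]
  constructor
  · rintro ⟨x, hx, rfl⟩
    unfold raise; split_ifs <;> omega
  · rintro ⟨hy, hyo, hyP⟩
    refine ⟨lower k m o y, ?_, raise_lower ho.2 (by simp [chordEnds, hyo, hyP])⟩
    unfold lower; split_ifs <;> omega

lemma image_lower_Icc (ho : o ∈ Icc 1 (2 * m + 1)) :
    (Icc 1 (2 * (k + m + 1)) \ chordEnds (o, k + 2 * m + 2)).image (lower k m o) =
      Icc 1 (2 * (k + m)) := by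
  rw [← image_raise_Icc ho, image_image, lower_comp_raise, image_id]

end Relabel

section Bijection

def insertChord (k m o : ℕ) (F : Finset (ℕ × ℕ)) : Finset (ℕ × ℕ) :=
  insert (o, k + 2 * m + 2) (F.image (Prod.map (raise k m o) (raise k m o)))

def removeChord (k m o : ℕ) (G : Finset (ℕ × ℕ)) : Finset (ℕ × ℕ) :=
  (G.erase (o, k + 2 * m + 2)).image (Prod.map (lower k m o) (lower k m o))

variable {k m o : ℕ}

lemma isChordDiagram_insertChord (hmk : 2 * m ≤ k) (ho : o ∈ Icc 1 (2 * m + 1))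
    {F : Finset (ℕ × ℕ)} (hF : IsChordDiagram (Icc 1 (2 * (k + m))) k F)
    (hlong : ∀ q ∈ F, q.1 = o → k + 2 * m < q.2) :
    IsChordDiagram (Icc 1 (2 * (k + m + 1))) (k + 1) (insertChord k m o F) := by
  have hraised := hF.image (raise_injective k m o).injOn (l := k + 1) fun q hq =>
    raise_chord hmk (mem_Icc.1 (hF.fst_mem hq)).1 (hF.add_le q hq)
      (mem_Icc.1 (hF.snd_mem hq)).2 (hlong q hq)
  rw [image_raise_Icc ho] at hraised
  rw [mem_Icc] at ho
  have hsub : chordEnds (o, k + 2 * m + 2) ⊆ Icc 1 (2 * (k + m + 1)) := by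
    simp only [chordEnds, insert_subset_iff, singleton_subset_iff, mem_Icc]
    omega
  have := hraised.insert (q := (o, k + 2 * m + 2)) (by simp only; omega) (by simp only; omega)
    disjoint_sdiff
  rwa [union_sdiff_of_subset hsub] at this

lemma isChordDiagram_removeChord (hmk : 2 * m ≤ k) (ho : o ∈ Icc 1 (2 * m + 1))
    {G : Finset (ℕ × ℕ)} (hG : IsChordDiagram (Icc 1 (2 * (k + m + 1))) (k + 1) G)
    (hoG : (o, k + 2 * m + 2) ∈ G) :
    IsChordDiagram (Icc 1 (2 * (k + m))) k (removeChord k m o G) ∧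
      ∀ q ∈ removeChord k m o G, q.1 = o → k + 2 * m < q.2 := by
  have herase := hG.erase hoG
  have hinj : Set.InjOn (lower k m o) ↑(Icc 1 (2 * (k + m + 1)) \ chordEnds (o, k + 2 * m + 2)) :=
    Set.LeftInvOn.injOn (f₁' := raise k m o) fun x hx => raise_lower (mem_Icc.1 ho).2
      (mem_sdiff.1 hx).2
  have hlowered := herase.image hinj (l := k) fun q hq => by
    have h1 := mem_sdiff.1 (herase.fst_mem hq)
    have h2 := mem_sdiff.1 (herase.snd_mem hq)
    exact lower_chord hmk (mem_Icc.1 ho).2 (mem_Icc.1 h1.1).1 (herase.add_le q hq)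
      (mem_Icc.1 h2.1).2 h2.2
  rw [image_lower_Icc ho] at hlowered
  exact ⟨hlowered, forall_mem_image.2 fun q hq => lower_chord_long (herase.add_le q hq)
    (mem_sdiff.1 (herase.fst_mem hq)).2 (mem_sdiff.1 (herase.snd_mem hq)).2⟩

lemma removeChord_insertChord (F : Finset (ℕ × ℕ)) :
    removeChord k m o (insertChord k m o F) = F := by
  have hnot : (o, k + 2 * m + 2) ∉ F.image (Prod.map (raise k m o) (raise k m o)) := fun h => by
    obtain ⟨q, -, hq⟩ := mem_image.1 h
    exact raise_ne k m o q.2 (congrArg Prod.snd hq)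
  rw [removeChord, insertChord, erase_insert hnot, image_image, Prod.map_comp_map,
    lower_comp_raise, Prod.map_id, image_id]

lemma insertChord_removeChord (ho : o ≤ 2 * m + 1) {G : Finset (ℕ × ℕ)} {S : Finset ℕ} {l : ℕ}
    (hG : IsChordDiagram S l G) (hoG : (o, k + 2 * m + 2) ∈ G) :
    insertChord k m o (removeChord k m o G) = G := by
  have herase := hG.erase hoG
  rw [insertChord, removeChord, image_image, Prod.map_comp_map, image_congr (g := id), image_id,
    insert_erase hoG]
  intro q hq
  exact Prod.ext (raise_lower ho (mem_sdiff.1 (herase.fst_mem hq)).2)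
    (raise_lower ho (mem_sdiff.1 (herase.snd_mem hq)).2)

end Bijection

section Counting

variable {k m : ℕ}

lemma card_filter_mem_chordDiagrams (hmk : 2 * m ≤ k) {o : ℕ} (ho : o ∈ Icc 1 (2 * m + 1)) :
    #((chordDiagrams (k + m + 1) (k + 1)).filter fun G => (o, k + 2 * m + 2) ∈ G) =
      #((chordDiagrams (k + m) k).filter fun F => ∀ q ∈ F, q.1 = o → k + 2 * m < q.2) := by
  refine card_nbij' (removeChord k m o) (insertChord k m o) (fun G hG => ?_) (fun F hF => ?_)
    (fun G hG => ?_) (fun F _ => removeChord_insertChord F)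
  · simp only [mem_coe, mem_filter, mem_chordDiagrams] at hG ⊢
    exact isChordDiagram_removeChord hmk ho hG.1 hG.2
  · simp only [mem_coe, mem_filter, mem_chordDiagrams] at hF ⊢
    exact ⟨isChordDiagram_insertChord hmk ho hF.1 hF.2, mem_insert_self _ _⟩
  · simp only [mem_coe, mem_filter, mem_chordDiagrams] at hG
    exact insertChord_removeChord (mem_Icc.1 ho).2 hG.1 hG.2

lemma card_chordDiagrams_succ (hmk : 2 * m ≤ k) :
    #(chordDiagrams (k + m + 1) (k + 1)) = (m + 1) * #(chordDiagrams (k + m) k) := by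
  have hpartner : ∀ G ∈ chordDiagrams (k + m + 1) (k + 1),
      #((Icc 1 (2 * m + 1)).filter fun o => (o, k + 2 * m + 2) ∈ G) = 1 := by
    intro G hG
    have hG := mem_chordDiagrams.1 hG
    obtain ⟨o, ho, huniq⟩ := hG.existsUnique_mk_mem (x := k + 2 * m + 2)
      (mem_Icc.2 ⟨by omega, by omega⟩) (by omega)
    have := hG.add_le _ ho
    have := mem_Icc.1 (hG.fst_mem ho)
    refine card_eq_one.2 ⟨o, eq_singleton_iff_unique_mem.2 ⟨mem_filter.2 ⟨?_, ho⟩,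
      fun o' ho' => huniq o' (mem_filter.1 ho').2⟩⟩
    exact mem_Icc.2 ⟨by omega, by omega⟩
  calc #(chordDiagrams (k + m + 1) (k + 1))
      = ∑ G ∈ chordDiagrams (k + m + 1) (k + 1),
          #((Icc 1 (2 * m + 1)).filter fun o => (o, k + 2 * m + 2) ∈ G) := by
        rw [sum_congr rfl hpartner, card_eq_sum_ones]
    _ = ∑ o ∈ Icc 1 (2 * m + 1),
          #((chordDiagrams (k + m + 1) (k + 1)).filter fun G => (o, k + 2 * m + 2) ∈ G) :=
        sum_card_bipartiteAbove_eq_sum_card_bipartiteBelow _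
    _ = ∑ o ∈ Icc 1 (2 * m + 1),
          #((chordDiagrams (k + m) k).filter fun F => ∀ q ∈ F, q.1 = o → k + 2 * m < q.2) :=
        sum_congr rfl fun _ ho => card_filter_mem_chordDiagrams hmk ho
    _ = ∑ F ∈ chordDiagrams (k + m) k,
          #((Icc 1 (2 * m + 1)).filter fun o => ∀ q ∈ F, q.1 = o → k + 2 * m < q.2) :=
        (sum_card_bipartiteAbove_eq_sum_card_bipartiteBelow _).symm
    _ = (m + 1) * #(chordDiagrams (k + m) k) := by
        rw [sum_congr rfl fun F hF => (mem_chordDiagrams.1 hF).card_Icc_filter_forall_lt_snd,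
          sum_const, smul_eq_mul, mul_comm]

end Counting

theorem stmt_8_general (n k : ℕ) (hkn : k ≤ n) (h3 : 3 * (n - k) ≤ n) :
    Nat.card (LCD (n + 1) (k + 1)) = (n - k + 1) * Nat.card (LCD n k) := by
  obtain ⟨m, rfl⟩ := Nat.exists_eq_add_of_le hkn
  rw [card_LCD, card_LCD, Nat.add_sub_cancel_left]
  exact card_chordDiagrams_succ (by omega)

theorem stmt_8 (n k : ℕ) (hn : 1 ≤ n) (hk : 1 ≤ k) (hkn : k ≤ n) (h3 : 3 * (n - k) ≤ n) :
    Nat.card (LCD (n + 1) (k + 1)) = (n - k + 1) * Nat.card (LCD n k) :=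
  stmt_8_general n k hkn h3
end
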